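/- arXiv:2002.11345 — 5 statements merged into one kernel-verified Lean document; each statement's English description precedes it below -/
import Mathlib

section
/- Let R = F2[x1^{±1},...,xd^{±1}] with involution f ↦ f̄. Let M be an N×N matrix over R that is Hermitian (M = M†, where † is transpose composed with entrywise involution) and such that for every j the diagonal entry M_{jj} has zero constant coefficient. Then there exists an N×N matrix T over R with T + T† = M. -/
/-!
Take for `T` the strict upper triangle of `M` together with a "half" of each diagonal entry.
A bar-invariant Laurent polynomial `f` with zero constant term is `h + h̄`, where `h` keeps the
monomials of `f` whose exponent is positive in the lexicographic order on `ℤ^d`: negation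
exchanges positive and negative exponents.
-/

/-- The Laurent polynomial ring `F₂[x₁^{±1},…,x_d^{±1}]`, realized as the group algebra
of `ℤ^d` over `F₂`. -/
abbrev R (d : ℕ) : Type := AddMonoidAlgebra (ZMod 2) (Fin d → ℤ)

/-- The involution (antipode) `f ↦ f̄` induced by `xᵢ ↦ xᵢ⁻¹`, i.e. negation of exponents. -/
noncomputable def bar (d : ℕ) : R d ≃ₐ[ZMod 2] R d :=
  AddMonoidAlgebra.domCongr (ZMod 2) (ZMod 2) (AddEquiv.neg (Fin d → ℤ))

/-- The matrix adjoint `A†`: transpose with the involution applied entrywise. -/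
noncomputable def adj {d : ℕ} {m n : Type*} (A : Matrix m n (R d)) : Matrix n m (R d) :=
  (A.map (bar d)).transpose

namespace AddMonoidAlgebra

variable {k G : Type*} [CommSemiring k] [AddCommGroup G] [LinearOrder G] [IsOrderedAddMonoid G]

theorem exists_add_domCongr_neg_eq {f : AddMonoidAlgebra k G}
    (hf : domCongr k k (AddEquiv.neg G) f = f) (h0 : f.coeff 0 = 0) :
    ∃ t, t + domCongr k k (AddEquiv.neg G) t = f := by
  classical
  have hsymm (a : G) : f.coeff (-a) = f.coeff a := by
    rw [← congrArg (coeff · a) hf, coeff_domCongr]; rfl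
  refine ⟨ofCoeff (f.coeff.filter (0 < ·)), ?_⟩
  ext a
  simp only [coeff_add, coeff_domCongr, Finsupp.add_apply, Finsupp.filter_apply]
  rcases lt_trichotomy 0 a with ha | rfl | ha
  · simp [ha, ha.not_gt]
  · simp [h0]
  · simp [ha.not_gt, ha, hsymm]

end AddMonoidAlgebra

theorem Matrix.exists_add_transpose_map_eq {α n : Type*} [AddZeroClass α] [LinearOrder n]
    (σ : α → α) (hσ : σ 0 = 0) {M : Matrix n n α} (hM : (M.map σ).transpose = M)
    (hdiag : ∀ i, ∃ t, t + σ t = M i i) :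
    ∃ T : Matrix n n α, T + (T.map σ).transpose = M := by
  classical
  choose t ht using hdiag
  refine ⟨Matrix.of fun i j => if i < j then M i j else if i = j then t i else 0, ?_⟩
  ext i j
  have hMij : σ (M j i) = M i j := congrFun (congrFun hM i) j
  rcases lt_trichotomy i j with h | rfl | h
  · simp [h, h.not_gt, h.ne', hσ]
  · simp [ht]
  · simp [h, h.not_gt, h.ne', hMij]

/-- A Hermitian matrix over the Laurent polynomial ring whose diagonal entries have zero
constant coefficient can be written as `T + T†`. -/
theorem stmt_1 (d N : ℕ) (M : Matrix (Fin N) (Fin N) (R d))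
    (hherm : adj M = M) (hdiag : ∀ j : Fin N, (M j j).coeff 0 = 0) :
    ∃ T : Matrix (Fin N) (Fin N) (R d), T + adj T = M := by
  refine Matrix.exists_add_transpose_map_eq (bar d) (map_zero _) hherm fun i => ?_
  have hbar : bar d (M i i) = M i i := congrFun (congrFun hherm i) i
  -- `Lex` is a type synonym, so `R d` is literally the group algebra of `Lex (Fin d → ℤ)`.
  exact AddMonoidAlgebra.exists_add_domCongr_neg_eq (G := Lex (Fin d → ℤ)) hbar (hdiag i)
end

section
/- Let R = F2[x1^{±1},...,xd^{±1}] with adjoint †. Let Z be a 2K×N matrix over R and let X = (0_{K×K}; I_{K×K}) be the 2K×K matrix, and suppose ⟨Z,Z⟩ := Z†λ_K Z = 0 where λ_K = (0 I_K; I_K 0). Define the 2N×(N+K) matrix σ̃ = (X̃ Z̃) with X̃ = (0_{N×N}; I_{N×N}) and Z̃ = (⟨Z,X⟩; 0_{N×K}) where ⟨Z,X⟩ = Z†λ_K X. Then with σ = (Z X), the commutation matrices agree: σ̃†λ_N σ̃ = σ†λ_K σ. -/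
/-- The standard symplectic form `λ_M = (0 I; I 0)` with `M × M` blocks. -/
noncomputable def lam (d M : ℕ) : Matrix (Fin M ⊕ Fin M) (Fin M ⊕ Fin M) (R d) :=
  Matrix.fromBlocks 0 1 1 0

lemma bar_bar (d : ℕ) (f : R d) : bar d (bar d f) = f := by
  ext g
  simp [bar]

lemma adj_adj {d : ℕ} {m n : Type*} (A : Matrix m n (R d)) : adj (adj A) = A := by
  ext i j; simp [adj, bar_bar]

lemma adj_mul {d : ℕ} {m n p : Type*} [Fintype n] (A : Matrix m n (R d))
    (B : Matrix n p (R d)) : adj (A * B) = adj B * adj A := by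
  ext i j
  simp [adj, Matrix.mul_apply, map_sum, map_mul, mul_comm]

lemma adj_zero {d : ℕ} {m n : Type*} : adj (0 : Matrix m n (R d)) = 0 := by
  ext i j; simp [adj]

lemma adj_one {d : ℕ} {n : Type*} [DecidableEq n] : adj (1 : Matrix n n (R d)) = 1 := by
  ext i j
  simp [adj, Matrix.one_apply]
  split <;> split <;> simp_all [eq_comm]

lemma adj_fromRows {d : ℕ} {m₁ m₂ n : Type*} (A : Matrix m₁ n (R d)) (B : Matrix m₂ n (R d)) :
    adj (Matrix.fromRows A B) = Matrix.fromCols (adj A) (adj B) := by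
  ext i (j | j) <;> simp [adj]

lemma adj_fromCols {d : ℕ} {m n₁ n₂ : Type*} (A : Matrix m n₁ (R d)) (B : Matrix m n₂ (R d)) :
    adj (Matrix.fromCols A B) = Matrix.fromRows (adj A) (adj B) := by
  ext (i | i) j <;> simp [adj]

lemma adj_lam (d M : ℕ) : adj (lam d M) = lam d M := by
  ext (i | i) (j | j) <;>
    simp [adj, lam, Matrix.fromBlocks, Matrix.one_apply] <;>
    split <;> simp_all [eq_comm]

lemma adj_fromBlocks {d : ℕ} {m₁ m₂ n₁ n₂ : Type*} (A : Matrix m₁ n₁ (R d))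
    (B : Matrix m₁ n₂ (R d)) (C : Matrix m₂ n₁ (R d)) (D : Matrix m₂ n₂ (R d)) :
    adj (Matrix.fromBlocks A B C D) = Matrix.fromBlocks (adj A) (adj C) (adj B) (adj D) := by
  ext (i | i) (j | j) <;> simp [adj, Matrix.fromBlocks]


/-- The Kramers-Wannier dual generating map preserves all commutation relations:
with `σ = (Z X)`, `X = (0; I)`, and `σ̃ = (X̃ Z̃)` where `X̃ = (0; I)` and
`Z̃ = (⟨Z,X⟩; 0)`, one has `σ̃†λ_N σ̃ = σ†λ_K σ`, assuming `⟨Z,Z⟩ = Z†λ_K Z = 0`. -/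
theorem stmt_6 (d K N : ℕ) (Z : Matrix (Fin K ⊕ Fin K) (Fin N) (R d))
    (X : Matrix (Fin K ⊕ Fin K) (Fin K) (R d))
    (hX : X = Matrix.fromRows 0 1)
    (hZZ : adj Z * lam d K * Z = 0)
    (σ : Matrix (Fin K ⊕ Fin K) (Fin N ⊕ Fin K) (R d))
    (hσ : σ = Matrix.fromCols Z X)
    (Xt : Matrix (Fin N ⊕ Fin N) (Fin N) (R d))
    (hXt : Xt = Matrix.fromRows 0 1)
    (Zt : Matrix (Fin N ⊕ Fin N) (Fin K) (R d))
    (hZt : Zt = Matrix.fromRows (adj Z * lam d K * X) 0)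
    (σt : Matrix (Fin N ⊕ Fin N) (Fin N ⊕ Fin K) (R d))
    (hσt : σt = Matrix.fromCols Xt Zt) :
    adj σt * lam d N * σt = adj σ * lam d K * σ := by
  subst hX hσ hXt hZt hσt
  have hBadj : adj (adj Z * lam d K *
      (Matrix.fromRows 0 1 : Matrix (Fin K ⊕ Fin K) (Fin K) (R d))) =
      adj (Matrix.fromRows (0 : Matrix (Fin K) (Fin K) (R d)) (1 : Matrix (Fin K) (Fin K) (R d))) * (lam d K * Z) := by
    rw [adj_mul, adj_mul, adj_adj, adj_lam]
  simp only [adj_fromCols, Matrix.fromRows_mul, Matrix.mul_fromCols,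
    Matrix.fromRows_fromCols_eq_fromBlocks, Matrix.fromCols_fromRows_eq_fromBlocks,
    adj_fromBlocks, lam, Matrix.fromBlocks_multiply, adj_zero, adj_one,
    Matrix.mul_zero, Matrix.zero_mul, Matrix.mul_one, Matrix.one_mul,
    add_zero, zero_add]
  rw [Matrix.fromBlocks_inj]
  rw [lam] at hZZ hBadj
  refine ⟨hZZ.symm, rfl, ?_, ?_⟩
  · rw [hBadj, ← Matrix.mul_assoc]
  · simp [adj_fromRows, adj_zero, adj_one, Matrix.fromCols_mul_fromBlocks,
      Matrix.fromCols_mul_fromRows]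
end

section
/- Let R = F2[x1^{±1},...,xd^{±1}] with adjoint †, and fix K,N. Let Z_Z, Z_X be K×N matrices over R with Z_Z†Z_X + Z_X†Z_Z = 0. Define σ = (Z_Z 0; Z_X I_K) (a 2K×(N+K) matrix), ε = (Z_X† Z_Z†; I_K 0) (a (N+K)×2K matrix), σ̃ = (0 Z_Z†; I_N 0) (a 2N×(N+K) matrix), and ε̃ = (I_N 0; 0 Z_Z) (an (N+K)×2N matrix). Then ker ε = σ(ker σ̃) and ker ε̃ = σ̃(ker σ), where kernels and images are taken as R-submodules of the appropriate free modules. -/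
lemma Radd {d : ℕ} (r : R d) : r + r = 0 := by
  have h := Nat.cast_smul_eq_nsmul (ZMod 2) 2 r
  rw [show ((2:ℕ):ZMod 2) = 0 by decide, zero_smul, two_nsmul] at h
  exact h.symm

lemma veq {d : ℕ} {n : Type*} {v w : n → R d} (h : v + w = 0) : v = w := by
  funext i
  have h1 : v i + w i = 0 := congrFun h i
  rw [← zero_add (w i), ← h1, add_assoc, Radd, add_zero]

lemma madd {d : ℕ} {m n : Type*} {A B : Matrix m n (R d)} (h : A + B = 0) : A = B := by
  ext i j
  have h1 : A i j + B i j = 0 := congrFun (congrFun h i) j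
  rw [← zero_add (B i j), ← h1, add_assoc, Radd, add_zero]

lemma elim_eq_zero {α β γ : Type*} [Zero γ] {x : α → γ} {y : β → γ} :
    Sum.elim x y = (0 : α ⊕ β → γ) ↔ x = 0 ∧ y = 0 := by
  constructor
  · intro h
    exact ⟨funext fun i => congrFun h (Sum.inl i), funext fun i => congrFun h (Sum.inr i)⟩
  · rintro ⟨rfl, rfl⟩; funext z; cases z <;> rfl

/-- One-to-one correspondence between identity generators and dual symmetries in the
Kramers-Wannier duality: `ker ε = σ (ker σ̃)` and `ker ε̃ = σ̃ (ker σ)`. -/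
theorem stmt_9 (d K N : ℕ) (ZZ ZX : Matrix (Fin K) (Fin N) (R d))
    (hcomm : adj ZZ * ZX + adj ZX * ZZ = 0)
    (σ : Matrix (Fin K ⊕ Fin K) (Fin N ⊕ Fin K) (R d))
    (hσ : σ = Matrix.fromBlocks ZZ 0 ZX 1)
    (ε : Matrix (Fin N ⊕ Fin K) (Fin K ⊕ Fin K) (R d))
    (hε : ε = Matrix.fromBlocks (adj ZX) (adj ZZ) 1 0)
    (σt : Matrix (Fin N ⊕ Fin N) (Fin N ⊕ Fin K) (R d))
    (hσt : σt = Matrix.fromBlocks 0 (adj ZZ) 1 0)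
    (εt : Matrix (Fin N ⊕ Fin K) (Fin N ⊕ Fin N) (R d))
    (hεt : εt = Matrix.fromBlocks 1 0 0 ZZ) :
    LinearMap.ker ε.mulVecLin = Submodule.map σ.mulVecLin (LinearMap.ker σt.mulVecLin) ∧
      LinearMap.ker εt.mulVecLin = Submodule.map σt.mulVecLin (LinearMap.ker σ.mulVecLin) := by
  
  subst hσ hε hσt hεt
  have hZZX : adj ZZ * ZX = adj ZX * ZZ := madd hcomm
  have key : ∀ q : Fin N → R d, ZZ.mulVec q = 0 → (adj ZZ).mulVec (ZX.mulVec q) = 0 := by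
    intro q hq
    rw [Matrix.mulVec_mulVec, hZZX, ← Matrix.mulVec_mulVec, hq, Matrix.mulVec_zero]
  constructor
  · ext w
    simp only [LinearMap.mem_ker, Submodule.mem_map, Matrix.mulVecLin_apply]
    constructor
    · intro hw
      have hwe : w = Sum.elim (w ∘ Sum.inl) (w ∘ Sum.inr) := (Sum.elim_comp_inl_inr w).symm
      rw [hwe, Matrix.fromBlocks_mulVec, elim_eq_zero] at hw
      simp only [Sum.elim_comp_inl, Sum.elim_comp_inr, Matrix.one_mulVec,
        Matrix.zero_mulVec, add_zero] at hw
      obtain ⟨h1, hc⟩ := hw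
      have hd : (adj ZZ).mulVec (w ∘ Sum.inr) = 0 := by
        rw [hc] at h1; simpa [Matrix.mulVec_zero] using h1
      refine ⟨Sum.elim 0 (w ∘ Sum.inr), ?_, ?_⟩
      · rw [Matrix.fromBlocks_mulVec, elim_eq_zero]
        constructor <;> simp [Sum.elim_comp_inl, Sum.elim_comp_inr, hd,
          Matrix.zero_mulVec, Matrix.mulVec_zero, Matrix.one_mulVec]
      · rw [Matrix.fromBlocks_mulVec, hwe, hc]
        congr 1 <;> simp [Sum.elim_comp_inl, Sum.elim_comp_inr,
          Matrix.mulVec_zero, Matrix.zero_mulVec, Matrix.one_mulVec]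
    · rintro ⟨u, hu, rfl⟩
      have hue : u = Sum.elim (u ∘ Sum.inl) (u ∘ Sum.inr) := (Sum.elim_comp_inl_inr u).symm
      rw [hue, Matrix.fromBlocks_mulVec, elim_eq_zero] at hu
      simp only [Sum.elim_comp_inl, Sum.elim_comp_inr, Matrix.one_mulVec,
        Matrix.zero_mulVec, add_zero, zero_add] at hu
      obtain ⟨hb, ha⟩ := hu
      have e1 : (Matrix.fromBlocks ZZ 0 ZX 1).mulVec (Sum.elim (u ∘ Sum.inl) (u ∘ Sum.inr))
          = Sum.elim (0 : Fin K → R d) (u ∘ Sum.inr) := by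
        rw [Matrix.fromBlocks_mulVec]
        congr 1 <;> simp [Sum.elim_comp_inl, Sum.elim_comp_inr, ha,
          Matrix.mulVec_zero, Matrix.zero_mulVec, Matrix.one_mulVec]
      rw [hue, e1, Matrix.fromBlocks_mulVec, elim_eq_zero]
      constructor <;> simp [Sum.elim_comp_inl, Sum.elim_comp_inr, hb,
        Matrix.mulVec_zero, Matrix.zero_mulVec, Matrix.one_mulVec]
  · ext w
    simp only [LinearMap.mem_ker, Submodule.mem_map, Matrix.mulVecLin_apply]
    constructor
    · intro hw
      have hwe : w = Sum.elim (w ∘ Sum.inl) (w ∘ Sum.inr) := (Sum.elim_comp_inl_inr w).symm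
      rw [hwe, Matrix.fromBlocks_mulVec, elim_eq_zero] at hw
      simp only [Sum.elim_comp_inl, Sum.elim_comp_inr, Matrix.one_mulVec,
        Matrix.zero_mulVec, add_zero, zero_add] at hw
      obtain ⟨hp, hq⟩ := hw
      refine ⟨Sum.elim (w ∘ Sum.inr) (ZX.mulVec (w ∘ Sum.inr)), ?_, ?_⟩
      · rw [Matrix.fromBlocks_mulVec, elim_eq_zero]
        constructor
        · simpa [Sum.elim_comp_inl, Sum.elim_comp_inr, Matrix.zero_mulVec] using hq
        · simp only [Sum.elim_comp_inl, Sum.elim_comp_inr, Matrix.one_mulVec]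
          exact funext fun i => Radd _
      · rw [Matrix.fromBlocks_mulVec, hwe, hp]
        congr 1 <;> simp [Sum.elim_comp_inl, Sum.elim_comp_inr, Matrix.zero_mulVec,
          Matrix.one_mulVec, key _ hq]
    · rintro ⟨u, hu, rfl⟩
      have hue : u = Sum.elim (u ∘ Sum.inl) (u ∘ Sum.inr) := (Sum.elim_comp_inl_inr u).symm
      rw [hue, Matrix.fromBlocks_mulVec, elim_eq_zero] at hu
      simp only [Sum.elim_comp_inl, Sum.elim_comp_inr, Matrix.one_mulVec,
        Matrix.zero_mulVec, add_zero] at hu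
      obtain ⟨ha, h2⟩ := hu
      have hb : u ∘ Sum.inr = ZX.mulVec (u ∘ Sum.inl) := (veq h2).symm
      have e1 : (Matrix.fromBlocks 0 (adj ZZ) 1 0).mulVec
          (Sum.elim (u ∘ Sum.inl) (ZX.mulVec (u ∘ Sum.inl)))
          = Sum.elim (0 : Fin N → R d) (u ∘ Sum.inl) := by
        rw [Matrix.fromBlocks_mulVec]
        congr 1 <;> simp [Sum.elim_comp_inl, Sum.elim_comp_inr, key _ ha,
          Matrix.zero_mulVec, Matrix.mulVec_zero, Matrix.one_mulVec]
      rw [hue, hb, e1, Matrix.fromBlocks_mulVec, elim_eq_zero]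
      constructor <;> simp [Sum.elim_comp_inl, Sum.elim_comp_inr, ha,
        Matrix.mulVec_zero, Matrix.zero_mulVec, Matrix.one_mulVec]
end

section
/- Let R = F2[x1^{±1},...,xd^{±1}] with adjoint †, and fix K,N. Let S_Z, S_X be K×N matrices over R, and let T be an N×N matrix with T + T† = S_Z†S_Z + S_X†S_X. Define σ_F = (S_Z I_K; S_X I_K), ε_F = (S_Z† S_X†; I_K I_K), σ̃ = (T S_Z†+S_X†; I_N 0), and ε̃ = (I_N T†; 0 S_Z+S_X). Then ker ε_F = σ_F(ker σ̃) and ker ε̃ = σ̃(ker σ_F), as R-submodules. -/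
open scoped Matrix

lemma R.add_self {d : ℕ} (x : R d) : x + x = 0 := by
  rw [← two_smul (ZMod 2) x, show (2 : ZMod 2) = 0 from rfl, zero_smul]

lemma R.add_eq_zero_iff {d : ℕ} (x y : R d) : x + y = 0 ↔ x = y := by
  constructor
  · intro h
    have := congrArg (· + y) h
    simpa [add_assoc, R.add_self] using this
  · rintro rfl; exact R.add_self x

lemma vec_add_self {d : ℕ} {n : Type*} (x : n → R d) : x + x = 0 := by
  funext i; exact R.add_self (x i)

lemma mat_add_self {d : ℕ} {m n : Type*} (A : Matrix m n (R d)) : A + A = 0 :=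
  Matrix.ext fun i j => by simpa using R.add_self (A i j)

/-- One-to-one correspondence between identity generators and dual symmetries in the
generalized Jordan-Wigner duality: `ker ε_F = σ_F (ker σ̃)` and `ker ε̃ = σ̃ (ker σ_F)`. -/
theorem stmt_10 (d K N : ℕ) (SZ SX : Matrix (Fin K) (Fin N) (R d))
    (T : Matrix (Fin N) (Fin N) (R d))
    (hT : T + adj T = adj SZ * SZ + adj SX * SX)
    (σF : Matrix (Fin K ⊕ Fin K) (Fin N ⊕ Fin K) (R d))
    (hσF : σF = Matrix.fromBlocks SZ 1 SX 1)
    (εF : Matrix (Fin N ⊕ Fin K) (Fin K ⊕ Fin K) (R d))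
    (hεF : εF = Matrix.fromBlocks (adj SZ) (adj SX) 1 1)
    (σt : Matrix (Fin N ⊕ Fin N) (Fin N ⊕ Fin K) (R d))
    (hσt : σt = Matrix.fromBlocks T (adj SZ + adj SX) 1 0)
    (εt : Matrix (Fin N ⊕ Fin K) (Fin N ⊕ Fin N) (R d))
    (hεt : εt = Matrix.fromBlocks 1 (adj T) 0 (SZ + SX)) :
    LinearMap.ker εF.mulVecLin = Submodule.map σF.mulVecLin (LinearMap.ker σt.mulVecLin) ∧
      LinearMap.ker εt.mulVecLin = Submodule.map σt.mulVecLin (LinearMap.ker σF.mulVecLin) := by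
  -- the key matrix identity  εF * σF = εt * σt
  have key : εF * σF = εt * σt := by
    rw [hσF, hεF, hσt, hεt, Matrix.fromBlocks_multiply, Matrix.fromBlocks_multiply]
    simp only [Matrix.mul_one, Matrix.one_mul, Matrix.zero_mul, Matrix.mul_zero,
      add_zero, zero_add]
    rw [← hT, mat_add_self (1 : Matrix (Fin K) (Fin K) (R d))]
  constructor
  · ext v
    simp only [LinearMap.mem_ker, Submodule.mem_map, Matrix.mulVecLin_apply]
    constructor
    · intro hv
      rw [hεF, Matrix.fromBlocks_mulVec] at hv
      have h1 : adj SZ *ᵥ (v ∘ Sum.inl) + adj SX *ᵥ (v ∘ Sum.inr) = 0 := by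
        funext i; exact congrFun hv (Sum.inl i)
      have h2 : (1 : Matrix (Fin K) (Fin K) (R d)) *ᵥ (v ∘ Sum.inl)
          + (1 : Matrix (Fin K) (Fin K) (R d)) *ᵥ (v ∘ Sum.inr) = 0 := by
        funext i; exact congrFun hv (Sum.inr i)
      simp only [Matrix.one_mulVec] at h2
      have h2' : v ∘ Sum.inl = v ∘ Sum.inr := by
        funext i; exact (R.add_eq_zero_iff _ _).mp (congrFun h2 i)
      refine ⟨Sum.elim 0 (v ∘ Sum.inl), ?_, ?_⟩
      · rw [hσt, Matrix.fromBlocks_mulVec]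
        simp only [Sum.elim_comp_inl, Sum.elim_comp_inr, Matrix.mulVec_zero,
          Matrix.one_mulVec, Matrix.zero_mulVec, zero_add, add_zero]
        have h3 : (adj SZ + adj SX) *ᵥ (v ∘ Sum.inl) = 0 := by
          rw [Matrix.add_mulVec]
          rw [h2'] at h1 ⊢
          simpa using h1
        rw [h3]
        funext i; cases i <;> rfl
      · rw [hσF, Matrix.fromBlocks_mulVec]
        simp only [Sum.elim_comp_inl, Sum.elim_comp_inr, Matrix.mulVec_zero,
          Matrix.one_mulVec, zero_add]
        funext i
        cases i with
        | inl i => rfl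
        | inr i => exact congrFun h2' i
    · rintro ⟨u, hu, rfl⟩
      rw [Matrix.mulVec_mulVec, key, ← Matrix.mulVec_mulVec, hu, Matrix.mulVec_zero]
  · ext w
    simp only [LinearMap.mem_ker, Submodule.mem_map, Matrix.mulVecLin_apply]
    constructor
    · intro hw
      rw [hεt, Matrix.fromBlocks_mulVec] at hw
      have h1 : (1 : Matrix (Fin N) (Fin N) (R d)) *ᵥ (w ∘ Sum.inl)
          + adj T *ᵥ (w ∘ Sum.inr) = 0 := by
        funext i; exact congrFun hw (Sum.inl i)
      have h2 : (0 : Matrix (Fin K) (Fin N) (R d)) *ᵥ (w ∘ Sum.inl)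
          + (SZ + SX) *ᵥ (w ∘ Sum.inr) = 0 := by
        funext i; exact congrFun hw (Sum.inr i)
      simp only [Matrix.one_mulVec] at h1
      simp only [Matrix.zero_mulVec, zero_add] at h2
      have h1' : w ∘ Sum.inl = adj T *ᵥ (w ∘ Sum.inr) := by
        funext i; exact (R.add_eq_zero_iff _ _).mp (congrFun h1 i)
      have h2' : SZ *ᵥ (w ∘ Sum.inr) = SX *ᵥ (w ∘ Sum.inr) := by
        rw [Matrix.add_mulVec] at h2
        funext i; exact (R.add_eq_zero_iff _ _).mp (congrFun h2 i)
      refine ⟨Sum.elim (w ∘ Sum.inr) (SZ *ᵥ (w ∘ Sum.inr)), ?_, ?_⟩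
      · rw [hσF, Matrix.fromBlocks_mulVec]
        simp only [Sum.elim_comp_inl, Sum.elim_comp_inr, Matrix.one_mulVec]
        conv_lhs => rw [← h2']
        rw [vec_add_self]
        funext i; cases i <;> rfl
      · rw [hσt, Matrix.fromBlocks_mulVec]
        simp only [Sum.elim_comp_inl, Sum.elim_comp_inr, Matrix.one_mulVec,
          Matrix.zero_mulVec, add_zero]
        have main : T *ᵥ (w ∘ Sum.inr) + (adj SZ + adj SX) *ᵥ (SZ *ᵥ (w ∘ Sum.inr))
            = w ∘ Sum.inl := by
          rw [h1', Matrix.add_mulVec, Matrix.mulVec_mulVec, Matrix.mulVec_mulVec]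
          have hSX : (adj SX * SZ) *ᵥ (w ∘ Sum.inr) = (adj SX * SX) *ᵥ (w ∘ Sum.inr) := by
            rw [← Matrix.mulVec_mulVec, ← Matrix.mulVec_mulVec, h2']
          rw [hSX]
          have hsum : (adj SZ * SZ) *ᵥ (w ∘ Sum.inr) + (adj SX * SX) *ᵥ (w ∘ Sum.inr)
              = T *ᵥ (w ∘ Sum.inr) + adj T *ᵥ (w ∘ Sum.inr) := by
            rw [← Matrix.add_mulVec, ← Matrix.add_mulVec, hT]
          rw [hsum, ← add_assoc, vec_add_self, zero_add]
        rw [main]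
        funext i; cases i <;> rfl
    · rintro ⟨u, hu, rfl⟩
      rw [Matrix.mulVec_mulVec, ← key, ← Matrix.mulVec_mulVec, hu, Matrix.mulVec_zero]
end

section
/- Let R = F2[x^{±1}, y^{±1}] with involution f ↦ f̄ (x ↦ x^{-1}, y ↦ y^{-1}). There do not exist f1, f2 ∈ R satisfying all three equations: (1 + x^{-1})f1 + (1 + x)f̄1 = 0, (1 + y^{-1})f2 + (1 + y)f̄2 = 0, and (1 + x^{-1})f1 + (1 + y)f̄2 = 1 + x^{-1}y. -/
/-!
Applying the involution to the third equation and rewriting both of its terms with the first two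
equations (in characteristic two, `u + v = 0` means `u = v`) returns the third equation itself,
so its right-hand side `1 + x⁻¹y` would have to be fixed by the involution. It is not: its image is
`1 + xy⁻¹`.
-/

/-- The Laurent polynomial ring `F₂[x^{±1}, y^{±1}]` in two variables. -/
abbrev R2 : Type := AddMonoidAlgebra (ZMod 2) (Fin 2 → ℤ)

/-- The monomial `x^a y^b`. -/
noncomputable def m2 (a b : ℤ) : R2 := AddMonoidAlgebra.single ![a, b] 1

/-- The involution `f ↦ f̄` given by `x ↦ x⁻¹`, `y ↦ y⁻¹`. -/
noncomputable def bar2 : R2 ≃ₐ[ZMod 2] R2 :=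
  AddMonoidAlgebra.domCongr (ZMod 2) (ZMod 2) (AddEquiv.neg (Fin 2 → ℤ))

theorem map_eq_self_of_add_map_mul_eq_zero {A F : Type*} [Ring A] [CharP A 2] [FunLike F A A]
    [RingHomClass F A A] {σ : F} (hσ : Function.Involutive σ) {a b f g c : A}
    (hf : a * f + σ a * σ f = 0) (hg : b * g + σ b * σ g = 0) (hc : a * f + σ b * σ g = c) :
    σ c = c := by
  rw [CharTwo.add_eq_zero] at hf hg
  rw [← hc, map_add, map_mul, map_mul, hσ b, hσ g, ← hf, hg]

instance : CharP R2 2 :=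
  charP_of_injective_algebraMap' (ZMod 2) 2

lemma bar2_involutive : Function.Involutive bar2 := by
  intro f
  induction f using AddMonoidAlgebra.induction_linear with
  | zero => simp
  | add f g hf hg => rw [map_add, map_add, hf, hg]
  | single v r => simp [bar2, AddMonoidAlgebra.domCongr_single]

lemma bar2_m2 (a b : ℤ) : bar2 (m2 a b) = m2 (-a) (-b) := by
  simp [bar2, m2, AddMonoidAlgebra.domCongr_single, Matrix.neg_cons]

lemma m2_inj {a b c d : ℤ} : m2 a b = m2 c d ↔ a = c ∧ b = d := by
  simp [m2, AddMonoidAlgebra.single_left_inj one_ne_zero]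

/-- Non-existence of commuting interaction terms for the 2D bosonization with global
fermion parity: the three anomaly-cancellation equations have no common solution. -/
theorem stmt_13 :
    ¬ ∃ f1 f2 : R2,
      (1 + m2 (-1) 0) * f1 + (1 + m2 1 0) * bar2 f1 = 0 ∧
      (1 + m2 0 (-1)) * f2 + (1 + m2 0 1) * bar2 f2 = 0 ∧
      (1 + m2 (-1) 0) * f1 + (1 + m2 0 1) * bar2 f2 = 1 + m2 (-1) 1 := by
  rintro ⟨f1, f2, h1, h2, h3⟩
  have hbar : ∀ a b : ℤ, 1 + m2 a b = bar2 (1 + m2 (-a) (-b)) := by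
    intro a b
    rw [map_add, map_one, bar2_m2, neg_neg, neg_neg]
  rw [hbar 1 0, neg_zero] at h1
  rw [hbar 0 1, neg_zero] at h2 h3
  have hfixed := map_eq_self_of_add_map_mul_eq_zero bar2_involutive h1 h2 h3
  rw [map_add, map_one, bar2_m2, add_right_inj] at hfixed
  exact absurd (m2_inj.1 hfixed).1 (by decide)
end
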